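/- Eigenvalue identity for the invariant operator attached to maximal minors (the case d = 1 of the Bernstein–Sato polynomial of the ideal of maximal minors): there exists a nonzero constant c, depending only on m and n, such that for every natural number s and every choice of column subsets I_1,…,I_s ⊆ {1,…,n} each of cardinality m, Σ_{I ⊆ {1,…,n}, |I| = m} det(∂X_I)( det(X_I) · ∏_{j=1}^{s} det(X_{I_j}) ) = c·(∏_{i=n-m+1}^{n}(s+i))·∏_{j=1}^{s} det(X_{I_j}). -/

import Mathlib

/-!
Let `p ↦ p(∂)` be the algebra map sending `x_{ab}` to `∂_{ab}`, so that `det(∂X_I) = Δ_I(∂)` with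
`Δ_I = det X_I`. Expanding both determinants and regrouping the pairs `(I, τ)` into injective
column maps `d` (the Cauchy–Binet argument) turns `∑_I Δ_I(∂) ∘ Δ_I` into `∑_π sgn π · C(id, π)`,
where `C(a, b) = ∑_d ∏ᵢ ∂_{bᵢdᵢ} ∏ᵢ x_{aᵢdᵢ}`. Commuting the first variable leftwards past all
derivatives expresses `C(a, b)` through the polarization `E_{a₀b₀} = ∑_c x_{a₀c} ∂_{b₀c}`, a
diagonal term `n · C` and terms in which a row index of `b` is replaced by `b₀`. A product `F` of
`s` maximal minors satisfies `E_{ab} F = δ_{ab} s F`, so on `F` this is a scalar recursion with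
diagonal constant `s + n`, and the signed sum over `π` peels off one factor `s + n - k` at a time:
the eigenvalue is `∏_{k<m} (s + n - k)`.
-/

open MvPolynomial

/-- The partial-derivative operator `∂_{ab}` as a linear endomorphism of
`ℂ[x_{ab} : 1 ≤ a ≤ m, 1 ≤ b ≤ n]`. -/
noncomputable def pd7 {m n : ℕ} (v : Fin m × Fin n) :
    Module.End ℂ (MvPolynomial (Fin m × Fin n) ℂ) :=
  (pderiv v).toLinearMap

/-- The increasing enumeration of the columns in a subset `I ⊆ {1,…,n}` of
cardinality `m`. -/
def colEmb7 {m n : ℕ} (I : {I : Finset (Fin n) // I.card = m}) : Fin m → Fin n :=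
  fun j => ((I.1.orderIsoOfFin I.2 j : I.1) : Fin n)

/-- The maximal minor `det(X_I)` of the generic `m × n` matrix on the columns in `I`. -/
noncomputable def maxMinor7 {m n : ℕ} (I : {I : Finset (Fin n) // I.card = m}) :
    MvPolynomial (Fin m × Fin n) ℂ :=
  (Matrix.of fun a j => (X (a, colEmb7 I j) : MvPolynomial (Fin m × Fin n) ℂ)).det

/-- The differential operator `det(∂X_I) = Σ_σ sgn(σ) ∏_a ∂_{a,σ(a)}`, the sum being
over bijections `σ` from the rows to the columns in `I` (written via the increasing
enumeration of `I`; the operators `∂_{ab}` pairwise commute, so the order of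
composition is immaterial). -/
noncomputable def minorOp7 {m n : ℕ} (I : {I : Finset (Fin n) // I.card = m}) :
    Module.End ℂ (MvPolynomial (Fin m × Fin n) ℂ) :=
  ∑ σ : Equiv.Perm (Fin m),
    (Equiv.Perm.sign σ : ℤ) • (List.ofFn fun a => pd7 (a, colEmb7 I (σ a))).prod

namespace MvPolynomial

variable {R σ : Type*} [CommRing R]

theorem pderiv_comm (i j : σ) (f : MvPolynomial σ R) :
    pderiv i (pderiv j f) = pderiv j (pderiv i f) := by
  have : ⁅pderiv (R := R) i, pderiv j⁆ = 0 :=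
    derivation_ext fun k => by
      classical
      rw [Derivation.commutator_apply, pderiv_X, pderiv_X, Pi.single_apply, Pi.single_apply]
      split_ifs <;> simp
  rw [← sub_eq_zero, ← Derivation.commutator_apply, this, Derivation.zero_apply]

theorem isMulCommutative_adjoin_pderiv :
    IsMulCommutative (Algebra.adjoin R (Set.range fun i : σ => (pderiv (R := R) i).toLinearMap)) :=
  Algebra.isMulCommutative_adjoin R <| by
    rintro _ ⟨i, rfl⟩ _ ⟨j, rfl⟩
    exact LinearMap.ext fun f => pderiv_comm i j f

open scoped IsMulCommutative in
/-- `p ↦ p(∂)`: a polynomial evaluated at the (commuting) partial derivatives. -/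
noncomputable def diffOp : MvPolynomial σ R →ₐ[R] Module.End R (MvPolynomial σ R) :=
  haveI := isMulCommutative_adjoin_pderiv (R := R) (σ := σ)
  (Algebra.adjoin R (Set.range fun i : σ => (pderiv (R := R) i).toLinearMap)).val.comp <|
    aeval fun i => ⟨(pderiv i).toLinearMap, Algebra.subset_adjoin ⟨i, rfl⟩⟩

@[simp]
theorem diffOp_X (i : σ) : diffOp (X i : MvPolynomial σ R) = (pderiv i).toLinearMap := by
  simp [diffOp]

theorem pderiv_mul_lmul (i : σ) (q : MvPolynomial σ R) :
    (pderiv i).toLinearMap * Algebra.lmul R _ q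
      = Algebra.lmul R _ q * (pderiv i).toLinearMap + Algebra.lmul R _ (pderiv i q) := by
  refine LinearMap.ext fun f => ?_
  simp [add_comm, mul_comm]

theorem diffOp_mul_lmul_X (p : MvPolynomial σ R) (i : σ) :
    diffOp p * Algebra.lmul R _ (X i)
      = Algebra.lmul R _ (X i) * diffOp p + diffOp (pderiv i p) := by
  induction p using MvPolynomial.induction_on with
  | C r => refine LinearMap.ext fun f => ?_; simp [diffOp, Algebra.smul_def, mul_left_comm]
  | add p q hp hq => simp only [map_add, add_mul, mul_add, hp, hq]; abel
  | mul_X p j hp =>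
    classical
    have hδ : Algebra.lmul R _ (pderiv j (X i)) = diffOp (pderiv i (X j) : MvPolynomial σ R) := by
      rw [pderiv_X, pderiv_X, Pi.single_apply, Pi.single_apply]
      by_cases h : i = j
      · rw [if_pos h, if_pos h.symm, map_one, map_one]
      · rw [if_neg h, if_neg (Ne.symm h), map_zero, map_zero]
    rw [map_mul, diffOp_X, mul_assoc, pderiv_mul_lmul, hδ, mul_add, ← mul_assoc, hp,
      pderiv_mul, map_add, map_mul, map_mul, diffOp_X]
    noncomm_ring

end MvPolynomial

theorem Derivation.leibniz_prod {R A M ι : Type*} [DecidableEq ι] [CommSemiring R]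
    [CommSemiring A] [Algebra R A] [AddCommMonoid M] [Module A M] [Module R M]
    [IsScalarTower R A M] (D : Derivation R A M) (s : Finset ι) (f : ι → A) :
    D (∏ i ∈ s, f i) = ∑ i ∈ s, (∏ j ∈ s.erase i, f j) • D (f i) := by
  induction s using Finset.induction_on with
  | empty => simp
  | insert a s ha ih =>
    rw [Finset.prod_insert ha, D.leibniz, ih, Finset.sum_insert ha, Finset.erase_insert ha,
      Finset.smul_sum, add_comm]
    congr 1
    refine Finset.sum_congr rfl fun i hi => ?_
    rw [Finset.erase_insert_of_ne (ne_of_mem_of_not_mem hi ha).symm,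
      Finset.prod_insert fun h => ha (Finset.mem_of_mem_erase h), mul_smul]

theorem Finset.prod_range_sub_eq_prod_Icc {M : Type*} [CommMonoid M] (f : ℕ → M) {m n : ℕ}
    (hmn : m ≤ n) : ∏ t ∈ Finset.range m, f (n - t) = ∏ i ∈ Finset.Icc (n - m + 1) n, f i :=
  Finset.prod_nbij' (fun t => n - t) (fun i => n - i) (by simp; omega) (by simp; omega)
    (by simp; omega) (by simp; omega) fun _ _ => rfl

namespace MaximalMinors

open Equiv

section Polarization

variable {R ι κ : Type*} [CommSemiring R]

noncomputable def entryProd {k : ℕ} (β : Fin k → ι) (d : Fin k → κ) : MvPolynomial (ι × κ) R :=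
  ∏ i, X (β i, d i)

theorem entryProd_cons {k : ℕ} (β : Fin (k + 1) → ι) (c : κ) (d : Fin k → κ) :
    (entryProd β (Fin.cons c d) : MvPolynomial (ι × κ) R)
      = X (β 0, c) * entryProd (Fin.tail β) d := by
  simp [entryProd, Fin.prod_univ_succ, Fin.tail]

variable [Fintype κ]

noncomputable def polarization (a b : ι) :
    Derivation R (MvPolynomial (ι × κ) R) (MvPolynomial (ι × κ) R) :=
  ∑ c, (X (a, c) : MvPolynomial (ι × κ) R) • pderiv (b, c)

theorem polarization_apply (a b : ι) (f : MvPolynomial (ι × κ) R) :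
    polarization a b f = ∑ c, X (a, c) * pderiv (b, c) f := by
  rw [polarization, ← Derivation.coeFnAddMonoidHom_apply, map_sum, Finset.sum_apply]
  rfl

variable [DecidableEq ι]

theorem polarization_X (a b r : ι) (c : κ) :
    polarization a b (X (r, c) : MvPolynomial (ι × κ) R) = if r = b then X (a, c) else 0 := by
  classical
  by_cases h : r = b <;> simp [h, polarization_apply, pderiv_X, Pi.single_apply, Prod.ext_iff]

theorem polarization_entryProd {k : ℕ} (a b : ι) (β : Fin k → ι) (d : Fin k → κ) :
    polarization a b (entryProd β d : MvPolynomial (ι × κ) R)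
      = ∑ j, if β j = b then entryProd (Function.update β j a) d else 0 := by
  rw [entryProd, Derivation.leibniz_prod]
  refine Finset.sum_congr rfl fun j _ => ?_
  rw [polarization_X, smul_eq_mul]
  split_ifs
  · rw [entryProd, ← Finset.prod_erase_mul _ (fun i => X (Function.update β j a i, d i))
      (Finset.mem_univ j), Function.update_self]
    congr 1
    refine Finset.prod_congr rfl fun i hi => ?_
    rw [Function.update_of_ne (Finset.ne_of_mem_erase hi)]
  · exact mul_zero _

theorem polarization_entryProd_perm {m : ℕ} (a b : Fin m) (σ : Perm (Fin m)) (d : Fin m → κ) :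
    polarization a b (entryProd σ d : MvPolynomial (Fin m × κ) R)
      = entryProd (Function.update id b a ∘ σ) d := by
  simp_rw [polarization_entryProd, ← σ.eq_symm_apply, Finset.sum_ite_eq', Finset.mem_univ,
    if_true, Function.update_comp_equiv, Function.id_comp]

/-- Infinitesimal form of: `f` is a semi-invariant of weight `detˢ` for the action of `GL_ι` on
the rows. -/
def IsDetWeight (s : R) (f : MvPolynomial (ι × κ) R) : Prop :=
  ∀ a b, polarization a b f = if a = b then s • f else 0

theorem IsDetWeight.of_mem_span {s : R} {f g : MvPolynomial (ι × κ) R} (hf : IsDetWeight s f)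
    (hg : g ∈ R ∙ f) : IsDetWeight s g := fun a b => by
  obtain ⟨r, rfl⟩ := Submodule.mem_span_singleton.mp hg
  rw [Derivation.map_smul, hf a b]
  split_ifs
  · exact smul_comm r s f
  · exact smul_zero r

theorem IsDetWeight.prod {α : Type*} [DecidableEq α] {t : Finset α} {w : α → R}
    {f : α → MvPolynomial (ι × κ) R} (h : ∀ j ∈ t, IsDetWeight (w j) (f j)) :
    IsDetWeight (∑ j ∈ t, w j) (∏ j ∈ t, f j) := by
  intro a b
  rw [Derivation.leibniz_prod, Finset.sum_congr rfl fun j hj => by rw [h j hj a b]]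
  split_ifs
  · rw [Finset.sum_smul]
    refine Finset.sum_congr rfl fun j hj => ?_
    rw [smul_eq_mul, mul_smul_comm, Finset.prod_erase_mul _ _ hj]
  · simp

end Polarization

section ColumnMinor

variable {R κ : Type*} [CommRing R] {m : ℕ}

noncomputable def columnMinor (d : Fin m → κ) : MvPolynomial (Fin m × κ) R :=
  (Matrix.of fun a j => X (a, d j)).det

theorem columnMinor_eq_sum_rows (d : Fin m → κ) :
    (columnMinor d : MvPolynomial (Fin m × κ) R)
      = ∑ π : Perm (Fin m), Perm.sign π • entryProd π d :=
  Matrix.det_apply _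

theorem columnMinor_eq_sum_columns (d : Fin m → κ) :
    (columnMinor d : MvPolynomial (Fin m × κ) R)
      = ∑ τ : Perm (Fin m), Perm.sign τ • entryProd id (d ∘ τ) := by
  rw [columnMinor, ← Matrix.det_transpose, Matrix.det_apply]
  rfl

theorem columnMinor_comp_perm (d : Fin m → κ) (τ : Perm (Fin m)) :
    (columnMinor (d ∘ τ) : MvPolynomial (Fin m × κ) R) = Perm.sign τ • columnMinor d := by
  rw [columnMinor, columnMinor, Units.smul_def, zsmul_eq_mul, ← Matrix.det_permute']
  rfl

theorem columnMinor_eq_zero {d : Fin m → κ} (hd : ¬ Function.Injective d) :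
    (columnMinor d : MvPolynomial (Fin m × κ) R) = 0 := by
  obtain ⟨i, j, hij, hne⟩ := Function.not_injective_iff.mp hd
  exact Matrix.det_zero_of_column_eq hne fun a => by simp [hij]

theorem isDetWeight_columnMinor [Fintype κ] (d : Fin m → κ) :
    IsDetWeight (1 : R) (columnMinor d) := by
  intro a b
  have h : polarization a b (columnMinor d : MvPolynomial (Fin m × κ) R)
      = (Matrix.of fun i j => X (Function.update id b a i, d j)).det := by
    simp only [columnMinor, Matrix.det_apply, map_sum, Units.smul_def, map_zsmul]
    exact Finset.sum_congr rfl fun σ _ => congrArg _ (polarization_entryProd_perm a b σ d)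
  rw [h]
  split_ifs with hab
  · subst hab
    rw [show Function.update id a a = id from Function.update_eq_self a id, one_smul]
    rfl
  · refine Matrix.det_zero_of_row_eq hab (funext fun j => ?_)
    simp [Function.update_of_ne hab]

end ColumnMinor

section Contraction

variable {R ι κ : Type*} [CommRing R] [Fintype κ]

/-- `∏ᵢ (∑_c ∂_{bᵢc} x_{aᵢc})` with every derivative moved to the left of every variable. -/
noncomputable def contraction {k : ℕ} (a b : Fin k → ι) : Module.End R (MvPolynomial (ι × κ) R) :=
  ∑ d : Fin k → κ, diffOp (entryProd b d) * Algebra.lmul R _ (entryProd a d)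

theorem contraction_zero (a b : Fin 0 → ι) :
    (contraction a b : Module.End R (MvPolynomial (ι × κ) R)) = 1 :=
  LinearMap.ext fun f => by simp [contraction, entryProd]

theorem toLinearMap_polarization (a b : ι) :
    (polarization a b).toLinearMap
      = ∑ c, Algebra.lmul R (MvPolynomial (ι × κ) R) (X (a, c)) * diffOp (X (b, c)) := by
  refine LinearMap.ext fun f => ?_
  simp [polarization_apply]

variable [DecidableEq ι]

theorem sum_pderiv_X_same_column (a b : ι) :
    ∑ c : κ, pderiv (a, c) (X (b, c) : MvPolynomial (ι × κ) R)
      = if a = b then (Fintype.card κ : MvPolynomial (ι × κ) R) else 0 := by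
  classical
  by_cases h : a = b
  · subst h
    simp
  · simp [h, pderiv_X, Prod.ext_iff, Ne.symm h]

theorem sum_diffOp_mul_lmul_entryProd_cons {k : ℕ} (a b : Fin (k + 1) → ι) (d : Fin k → κ) :
    ∑ c : κ, diffOp (entryProd b (Fin.cons c d) : MvPolynomial (ι × κ) R)
        * Algebra.lmul R _ (entryProd a (Fin.cons c d))
      = (polarization (a 0) (b 0)).toLinearMap
          * (diffOp (entryProd (Fin.tail b) d) * Algebra.lmul R _ (entryProd (Fin.tail a) d))
        + (if a 0 = b 0 then (Fintype.card κ : R) •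
            (diffOp (entryProd (Fin.tail b) d) * Algebra.lmul R _ (entryProd (Fin.tail a) d))
          else 0)
        + diffOp (polarization (b 0) (a 0) (entryProd (Fin.tail b) d))
          * Algebra.lmul R _ (entryProd (Fin.tail a) d) := by
  have hc : ∀ (c : κ) (Y Z : MvPolynomial (ι × κ) R),
      diffOp (X (b 0, c) * Y) * Algebra.lmul R _ (X (a 0, c) * Z)
        = Algebra.lmul R _ (X (a 0, c)) * diffOp (X (b 0, c)) * (diffOp Y * Algebra.lmul R _ Z)
          + diffOp (pderiv (a 0, c) (X (b 0, c))) * (diffOp Y * Algebra.lmul R _ Z)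
          + diffOp (X (b 0, c) * pderiv (a 0, c) Y) * Algebra.lmul R _ Z := by
    intro c Y Z
    rw [map_mul (Algebra.lmul R _), ← mul_assoc, diffOp_mul_lmul_X, pderiv_mul, map_add,
      map_mul, map_mul]
    noncomm_ring
  simp only [entryProd_cons, hc]
  rw [Finset.sum_add_distrib, Finset.sum_add_distrib, ← Finset.sum_mul, ← Finset.sum_mul,
    ← Finset.sum_mul, ← map_sum, ← map_sum, sum_pderiv_X_same_column, ← toLinearMap_polarization,
    ← polarization_apply]
  split_ifs
  · rw [map_natCast, ← nsmul_eq_mul, Nat.cast_smul_eq_nsmul]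
  · rw [map_zero, zero_mul]

theorem contraction_succ {k : ℕ} (a b : Fin (k + 1) → ι) :
    (contraction a b : Module.End R (MvPolynomial (ι × κ) R))
      = (polarization (a 0) (b 0)).toLinearMap * contraction (Fin.tail a) (Fin.tail b)
        + (if a 0 = b 0 then (Fintype.card κ : R) • contraction (Fin.tail a) (Fin.tail b) else 0)
        + ∑ j, if Fin.tail b j = a 0
            then contraction (Fin.tail a) (Function.update (Fin.tail b) j (b 0)) else 0 := by
  rw [contraction, ← (Fin.consEquiv fun _ => κ).sum_comp, Fintype.sum_prod_type, Finset.sum_comm]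
  simp only [Fin.consEquiv, Equiv.coe_fn_mk, sum_diffOp_mul_lmul_entryProd_cons,
    polarization_entryProd, map_sum, Finset.sum_mul, apply_ite diffOp, ite_mul, map_zero,
    zero_mul, Finset.sum_add_distrib]
  rw [Finset.sum_comm (s := Finset.univ (α := Fin k → κ))]
  simp only [contraction, Finset.mul_sum, Finset.smul_sum, Finset.sum_ite_irrel,
    Finset.sum_const_zero]

end Contraction

section SignedSum

variable {R M α : Type*} [CommRing R] [AddCommGroup M] [Module R M] [DecidableEq α]

/-- The recursion that `contraction_succ` induces on `k ↦ contraction a b f` for a weight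
vector `f`. -/
def ContractionRecursion (c : R) (A : ∀ k : ℕ, (Fin k → α) → (Fin k → α) → M) : Prop :=
  ∀ k (a b : Fin (k + 1) → α), A (k + 1) a b
    = (if a 0 = b 0 then c • A k (Fin.tail a) (Fin.tail b) else 0)
      + ∑ j, if Fin.tail b j = a 0 then A k (Fin.tail a) (Function.update (Fin.tail b) j (b 0))
        else 0

namespace ContractionRecursion

open Equiv.Perm

variable {c : R} {A : ∀ k : ℕ, (Fin k → α) → (Fin k → α) → M}

theorem apply_decomposeFin_zero (hA : ContractionRecursion c A) {k : ℕ} {ι : Fin (k + 1) → α}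
    (hι : Function.Injective ι) (σ : Perm (Fin k)) :
    A (k + 1) ι (ι ∘ decomposeFin.symm (0, σ)) = c • A k (Fin.tail ι) (Fin.tail ι ∘ σ) := by
  have htail : Fin.tail (ι ∘ decomposeFin.symm (0, σ)) = Fin.tail ι ∘ σ := by
    funext i
    simp [Fin.tail]
  rw [hA, htail]
  simp [Fin.tail, hι.eq_iff, Fin.succ_ne_zero]

theorem apply_decomposeFin_succ (hA : ContractionRecursion c A) {k : ℕ} {ι : Fin (k + 1) → α}
    (hι : Function.Injective ι) (q : Fin k) (σ : Perm (Fin k)) :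
    A (k + 1) ι (ι ∘ decomposeFin.symm (q.succ, σ)) = A k (Fin.tail ι) (Fin.tail ι ∘ σ) := by
  set π := decomposeFin.symm (q.succ, σ)
  have hπ : ∀ j, π j.succ = if j = σ.symm q then 0 else (σ j).succ := by
    intro j
    simp only [π, decomposeFin_symm_apply_succ, swap_apply_def, Fin.succ_ne_zero, Fin.succ_inj,
      σ.eq_symm_apply, if_false]
  -- `π` moves `0` to `q + 1`, so only the summand `j = σ⁻¹ q` of the recursion survives.
  have hcond : ∀ j, Fin.tail (ι ∘ π) j = ι 0 ↔ j = σ.symm q := fun j => by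
    by_cases hj : j = σ.symm q <;> simp [Fin.tail, hπ, hj, hι.eq_iff, Fin.succ_ne_zero]
  have h0 : ι 0 ≠ (ι ∘ π) 0 := by simp [π, hι.eq_iff, (Fin.succ_ne_zero q).symm]
  have hupd : Function.update (Fin.tail (ι ∘ π)) (σ.symm q) ((ι ∘ π) 0) = Fin.tail ι ∘ σ := by
    funext j
    rcases eq_or_ne j (σ.symm q) with rfl | hj
    · simp [π, Fin.tail]
    · simp [Fin.tail, hπ, hj]
  rw [hA, if_neg h0, zero_add, Finset.sum_congr rfl fun j _ => if_congr (hcond j) rfl rfl,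
    Finset.sum_ite_eq', if_pos (Finset.mem_univ _), hupd]

theorem sum_sign_smul_succ (hA : ContractionRecursion c A) {k : ℕ} {ι : Fin (k + 1) → α}
    (hι : Function.Injective ι) :
    ∑ π : Perm (Fin (k + 1)), (sign π : ℤ) • A (k + 1) ι (ι ∘ π)
      = (c - k) • ∑ σ : Perm (Fin k), (sign σ : ℤ) • A k (Fin.tail ι) (Fin.tail ι ∘ σ) := by
  -- Split by `π 0`: the block `π 0 = 0` gives `c • S`, each block `π 0 = q + 1` gives `-S`.
  rw [← decomposeFin.symm.sum_comp, Fintype.sum_prod_type, Fin.sum_univ_succ]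
  simp only [decomposeFin.symm_sign, hA.apply_decomposeFin_zero hι,
    hA.apply_decomposeFin_succ hι, Fin.succ_ne_zero, if_true, if_false]
  simp only [one_mul, neg_one_mul, Units.val_neg, neg_smul, Finset.sum_neg_distrib,
    Finset.sum_const, Finset.card_univ, Fintype.card_fin, smul_comm _ c, ← Finset.smul_sum]
  rw [sub_smul, sub_eq_add_neg, Nat.cast_smul_eq_nsmul]

theorem sum_sign_smul_eq_prod (hA : ContractionRecursion c A) :
    ∀ {k : ℕ} {ι : Fin k → α}, Function.Injective ι →
      ∑ π : Perm (Fin k), (sign π : ℤ) • A k ι (ι ∘ π)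
        = (∏ t ∈ Finset.range k, (c - t)) • A 0 ![] ![]
  | 0, ι, _ => by simp [Subsingleton.elim ι ![]]
  | k + 1, ι, hι => by
    rw [hA.sum_sign_smul_succ hι,
      hA.sum_sign_smul_eq_prod (ι := Fin.tail ι) fun i j h => Fin.succ_injective _ (hι h),
      smul_smul, Finset.prod_range_succ, mul_comm]

end ContractionRecursion

end SignedSum

section WeightVectors

variable {R ι κ : Type*} [CommRing R] [DecidableEq ι] [Fintype κ] {s : R}
  {f : MvPolynomial (ι × κ) R}

theorem IsDetWeight.contraction_apply_mem_span (hf : IsDetWeight s f) {k : ℕ}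
    (a b : Fin k → ι) : contraction a b f ∈ R ∙ f := by
  induction k with
  | zero => simp [contraction_zero]
  | succ k ih =>
    rw [contraction_succ]
    simp only [LinearMap.add_apply, Module.End.mul_apply, LinearMap.sum_apply,
      Derivation.coeFn_coe, hf.of_mem_span (ih _ _) (a 0) (b 0)]
    refine add_mem (add_mem ?_ ?_) (sum_mem fun j _ => ?_) <;> split_ifs
    all_goals first | exact zero_mem _ | exact Submodule.smul_mem _ _ (ih _ _) | exact ih _ _

theorem IsDetWeight.contractionRecursion (hf : IsDetWeight s f) :
    ContractionRecursion (s + Fintype.card κ)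
      fun k (a b : Fin k → ι) => (contraction a b : Module.End R (MvPolynomial (ι × κ) R)) f := by
  intro k a b
  beta_reduce
  rw [contraction_succ]
  simp only [LinearMap.add_apply, Module.End.mul_apply, LinearMap.sum_apply, Derivation.coeFn_coe,
    hf.of_mem_span (hf.contraction_apply_mem_span _ _) (a 0) (b 0),
    apply_ite (fun φ : Module.End R (MvPolynomial (ι × κ) R) => φ f), LinearMap.zero_apply,
    LinearMap.smul_apply]
  congr 1
  split_ifs
  · rw [add_smul]
  · rw [add_zero]

end WeightVectors

section CauchyBinet

variable {R : Type*} [CommRing R] {m n : ℕ}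

theorem colEmb7_injective (I : {I : Finset (Fin n) // I.card = m}) :
    Function.Injective (colEmb7 I) :=
  Subtype.val_injective.comp (I.1.orderIsoOfFin I.2).injective

theorem image_colEmb7_comp (I : {I : Finset (Fin n) // I.card = m}) (τ : Perm (Fin m)) :
    Finset.univ.image (colEmb7 I ∘ τ) = I.1 := by
  ext x
  simp only [Finset.mem_image, Finset.mem_univ, true_and, Function.comp_apply]
  refine ⟨fun ⟨j, hj⟩ => hj ▸ (I.1.orderIsoOfFin I.2 (τ j)).2, fun hx => ?_⟩
  refine ⟨τ.symm ((I.1.orderIsoOfFin I.2).symm ⟨x, hx⟩), ?_⟩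
  simp [colEmb7]

theorem exists_colEmb7_comp_eq {d : Fin m → Fin n} (hd : Function.Injective d) :
    ∃ (I : {I : Finset (Fin n) // I.card = m}) (τ : Perm (Fin m)), colEmb7 I ∘ τ = d := by
  let I : {I : Finset (Fin n) // I.card = m} := ⟨Finset.univ.image d, by
    rw [Finset.card_image_of_injective _ hd, Finset.card_univ, Fintype.card_fin]⟩
  let τ : Fin m → Fin m := fun i =>
    (I.1.orderIsoOfFin I.2).symm ⟨d i, Finset.mem_image_of_mem d (Finset.mem_univ i)⟩
  have hτ : colEmb7 I ∘ τ = d := funext fun i => by simp [τ, colEmb7]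
  have hinj : Function.Injective τ := fun i j h => hd (by rw [← hτ]; exact congrArg (colEmb7 I) h)
  exact ⟨I, Equiv.ofBijective τ (Finite.injective_iff_bijective.mp hinj), hτ⟩

theorem sum_sum_perm_comp_colEmb7 {M : Type*} [AddCommMonoid M] (g : (Fin m → Fin n) → M) :
    ∑ I : {I : Finset (Fin n) // I.card = m}, ∑ τ : Perm (Fin m), g (colEmb7 I ∘ τ)
      = ∑ d : Fin m → Fin n with Function.Injective d, g d := by
  rw [← Fintype.sum_prod_type']
  refine Finset.sum_bij (fun p _ => colEmb7 p.1 ∘ p.2) (fun p _ => ?_) (fun p _ q _ h => ?_)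
    (fun d hd => ?_) (fun _ _ => rfl)
  · simpa using (colEmb7_injective p.1).comp p.2.injective
  · have hI : p.1 = q.1 := Subtype.ext <| by
      rw [← image_colEmb7_comp p.1 p.2, ← image_colEmb7_comp q.1 q.2]
      exact congrArg (Finset.image · Finset.univ) h
    refine Prod.ext hI (Equiv.ext fun i => colEmb7_injective q.1 ?_)
    simpa [hI] using congrFun h i
  · obtain ⟨I, τ, h⟩ := exists_colEmb7_comp_eq (Finset.mem_filter.mp hd).2
    exact ⟨(I, τ), Finset.mem_univ _, h⟩

theorem sum_sign_smul_contraction_eq_sum_minors :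
    ∑ π : Perm (Fin m), (Perm.sign π : ℤ) •
        (contraction id π : Module.End R (MvPolynomial (Fin m × Fin n) R))
      = ∑ I : {I : Finset (Fin n) // I.card = m},
          diffOp (columnMinor (colEmb7 I)) * Algebra.lmul R _ (columnMinor (colEmb7 I)) := by
  calc _ = ∑ d : Fin m → Fin n, diffOp (columnMinor d : MvPolynomial (Fin m × Fin n) R)
              * Algebra.lmul R _ (entryProd id d) := by
        simp only [contraction, Finset.smul_sum, columnMinor_eq_sum_rows, map_sum, Finset.sum_mul,
          Units.smul_def, map_zsmul, smul_mul_assoc]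
        exact Finset.sum_comm
    _ = ∑ d : Fin m → Fin n with Function.Injective d, diffOp (columnMinor d)
              * Algebra.lmul R _ (entryProd id d) :=
        (Finset.sum_filter_of_ne fun d _ h => not_not.mp fun hd =>
          h (by rw [columnMinor_eq_zero hd, map_zero, zero_mul])).symm
    _ = _ := by
        rw [← sum_sum_perm_comp_colEmb7]
        refine Finset.sum_congr rfl fun I _ => ?_
        simp only [columnMinor_comp_perm, columnMinor_eq_sum_columns (colEmb7 I), map_sum,
          Finset.mul_sum, Units.smul_def, map_zsmul, smul_mul_assoc, mul_smul_comm]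

end CauchyBinet

theorem minorOp7_eq_diffOp {m n : ℕ} (I : {I : Finset (Fin n) // I.card = m}) :
    minorOp7 I = diffOp (maxMinor7 I) := by
  rw [show maxMinor7 I = columnMinor (colEmb7 I) from rfl, columnMinor_eq_sum_columns, map_sum,
    minorOp7]
  refine Finset.sum_congr rfl fun σ _ => ?_
  rw [Units.smul_def, map_zsmul, entryProd, ← List.prod_ofFn, map_list_prod, List.map_ofFn]
  simp [Function.comp_def, pd7]

end MaximalMinors

open MaximalMinors

theorem maximal_minors_eigenvalue_general (m n : ℕ) (hmn : m ≤ n) :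
    ∃ c : ℂ, c ≠ 0 ∧ ∀ (s : ℕ) (Is : Fin s → {I : Finset (Fin n) // I.card = m}),
      (∑ I : {I : Finset (Fin n) // I.card = m},
          minorOp7 I (maxMinor7 I * ∏ j : Fin s, maxMinor7 (Is j))) =
        (c * ∏ i ∈ Finset.Icc (n - m + 1) n, ((s : ℂ) + i)) •
          ∏ j : Fin s, maxMinor7 (Is j) := by
  refine ⟨1, one_ne_zero, fun s Is => ?_⟩
  have hF : IsDetWeight (s : ℂ) (∏ j : Fin s, maxMinor7 (Is j)) := by
    have h := IsDetWeight.prod (t := .univ) fun j _ =>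
      isDetWeight_columnMinor (R := ℂ) (colEmb7 (Is j))
    rwa [Finset.sum_const, Finset.card_univ, Fintype.card_fin, nsmul_one] at h
  calc _ = (∑ π : Equiv.Perm (Fin m), (Equiv.Perm.sign π : ℤ) • contraction id π)
            (∏ j : Fin s, maxMinor7 (Is j)) := by
        simp only [sum_sign_smul_contraction_eq_sum_minors, minorOp7_eq_diffOp,
          LinearMap.sum_apply, Module.End.mul_apply]
        rfl
    _ = (∏ t ∈ Finset.range m, ((s : ℂ) + n - t)) • ∏ j : Fin s, maxMinor7 (Is j) := by
        simpa [contraction_zero] using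
          hF.contractionRecursion.sum_sign_smul_eq_prod (ι := id) Function.injective_id
    _ = _ := by
        rw [one_mul, ← Finset.prod_range_sub_eq_prod_Icc (fun i => (s : ℂ) + i) hmn]
        refine congrArg (· • _) (Finset.prod_congr rfl fun t ht => ?_)
        rw [Nat.cast_sub (by simp at ht; omega), add_sub_assoc]

/-- Eigenvalue identity for the invariant operator attached to maximal minors:
there is a nonzero constant `c`, depending only on `m` and `n`, such that for every
`s ∈ ℕ` and every choice of column subsets `I₁,…,I_s` of cardinality `m`,
`Σ_{|I|=m} det(∂X_I)(det(X_I)·∏_j det(X_{I_j}))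
  = c·(∏_{i=n-m+1}^{n}(s+i))·∏_j det(X_{I_j})`. -/
theorem maximal_minors_eigenvalue (m n : ℕ) (hm : 1 ≤ m) (hmn : m ≤ n) :
    ∃ c : ℂ, c ≠ 0 ∧ ∀ (s : ℕ) (Is : Fin s → {I : Finset (Fin n) // I.card = m}),
      (∑ I : {I : Finset (Fin n) // I.card = m},
          minorOp7 I (maxMinor7 I * ∏ j : Fin s, maxMinor7 (Is j))) =
        (c * ∏ i ∈ Finset.Icc (n - m + 1) n, ((s : ℂ) + i)) •
          ∏ j : Fin s, maxMinor7 (Is j) :=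
  maximal_minors_eigenvalue_general m n hmn
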